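/- arXiv:2504.14457 — 2 statements merged into one kernel-verified Lean document; each statement's English description precedes it below -/
import Mathlib

section
/- Let ν > 0 and define the incomplete gamma function γ*(ν,z) = e^{-z} ∑_{m=0}^∞ z^m/Γ(ν+m+1) for z ∈ ℝ. Then lim_{t→∞} t^ν γ*(ν,t) = 1. -/
open Filter Real

section IGA_aux

open Set

namespace IGA

variable {ν : ℝ}

lemma gamma_lb (hν : 0 < ν) (m : ℕ) :
    Real.Gamma (ν + 1) * m.factorial ≤ Real.Gamma (ν + m + 1) := by
  induction m with
  | zero => simp
  | succ n ih =>
    have hpos : (0:ℝ) < ν + n + 1 := by positivity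
    have h1 : Real.Gamma (ν + (n+1:ℕ) + 1) = (ν + n + 1) * Real.Gamma (ν + n + 1) := by
      rw [show ν + (n+1:ℕ) + 1 = (ν + n + 1) + 1 by push_cast; ring,
        Real.Gamma_add_one hpos.ne']
    have hG : (0:ℝ) < Real.Gamma (ν + n + 1) := Real.Gamma_pos_of_pos (by positivity)
    have hfac : (Nat.factorial (n+1) : ℝ) = ((n:ℝ)+1) * n.factorial := by
      push_cast [Nat.factorial_succ]; ring
    rw [h1, hfac]
    calc Real.Gamma (ν+1) * (((n:ℝ)+1) * n.factorial)
        = ((n:ℝ)+1) * (Real.Gamma (ν+1) * n.factorial) := by ring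
      _ ≤ ((n:ℝ)+1) * Real.Gamma (ν + n + 1) :=
          mul_le_mul_of_nonneg_left ih (by positivity)
      _ ≤ (ν + n + 1) * Real.Gamma (ν + n + 1) :=
          mul_le_mul_of_nonneg_right (by linarith) hG.le

lemma summable_a (hν : 0 < ν) (t : ℝ) :
    Summable (fun m : ℕ => t ^ m / Real.Gamma (ν + m + 1)) := by
  have hG1 : (0:ℝ) < Real.Gamma (ν + 1) := Real.Gamma_pos_of_pos (by positivity)
  apply Summable.of_norm_bounded
    (g := fun m : ℕ => |t| ^ m / (Real.Gamma (ν+1) * m.factorial))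
  · have := (Real.summable_pow_div_factorial |t|).mul_left (1 / Real.Gamma (ν+1))
    apply this.congr
    intro m
    field_simp
  · intro m
    have hGm : (0:ℝ) < Real.Gamma (ν + m + 1) := Real.Gamma_pos_of_pos (by positivity)
    rw [norm_div, Real.norm_eq_abs, Real.norm_eq_abs, abs_pow, abs_of_pos hGm]
    gcongr
    exact gamma_lb hν m

lemma summable_u (hν : 0 < ν) (R : ℝ) :
    Summable (fun m : ℕ => (m:ℝ) * R ^ (m-1) / (Real.Gamma (ν+1) * m.factorial)) := by
  apply (summable_nat_add_iff 1).mp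
  have h : (fun m : ℕ => ((m+1:ℕ):ℝ) * R ^ ((m+1)-1) / (Real.Gamma (ν+1) * (m+1).factorial))
      = fun m : ℕ => (1 / Real.Gamma (ν+1)) * (R ^ m / m.factorial) := by
    funext m
    have hf : ((m+1).factorial : ℝ) = ((m:ℝ)+1) * m.factorial := by
      push_cast [Nat.factorial_succ]; ring
    have hG1 : (0:ℝ) < Real.Gamma (ν + 1) := Real.Gamma_pos_of_pos (by positivity)
    have hfac : (0:ℝ) < (m.factorial : ℝ) := by positivity
    push_cast [hf]
    field_simp
  rw [h]
  exact (Real.summable_pow_div_factorial R).mul_left _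

lemma summable_d (hν : 0 < ν) (t : ℝ) :
    Summable (fun m : ℕ => (m:ℝ) * t ^ (m-1) / Real.Gamma (ν + m + 1)) := by
  apply Summable.of_norm_bounded
    (g := fun m : ℕ => (m:ℝ) * |t| ^ (m-1) / (Real.Gamma (ν+1) * m.factorial))
    (summable_u hν |t|)
  intro m
  have hGm : (0:ℝ) < Real.Gamma (ν + m + 1) := Real.Gamma_pos_of_pos (by positivity)
  have hG1 : (0:ℝ) < Real.Gamma (ν + 1) := Real.Gamma_pos_of_pos (by positivity)
  rw [norm_div, Real.norm_eq_abs, Real.norm_eq_abs, abs_of_pos hGm, abs_mul,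
    abs_pow, Nat.abs_cast]
  gcongr
  exact gamma_lb hν m

lemma hasDerivAt_g (hν : 0 < ν) (t : ℝ) :
    HasDerivAt (fun s : ℝ => ∑' m : ℕ, s ^ m / Real.Gamma (ν + m + 1))
      (∑' m : ℕ, (m:ℝ) * t ^ (m-1) / Real.Gamma (ν + m + 1)) t := by
  set R : ℝ := |t| + 1 with hR
  have htR : t ∈ Metric.ball (0:ℝ) R := by
    simp only [Metric.mem_ball, dist_zero_right, Real.norm_eq_abs, hR]; linarith
  refine hasDerivAt_tsum_of_isPreconnected
    (u := fun m : ℕ => (m:ℝ) * R ^ (m-1) / (Real.Gamma (ν+1) * m.factorial))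
    (summable_u hν R) Metric.isOpen_ball (convex_ball (0:ℝ) R).isPreconnected
    (fun m y _ => ((hasDerivAt_pow m y).div_const _))
    (fun m y hy => ?_) htR (summable_a hν t) htR
  have hyR : |y| ≤ R := by
    simp only [Metric.mem_ball, dist_zero_right, Real.norm_eq_abs] at hy
    linarith
  have hGm : (0:ℝ) < Real.Gamma (ν + m + 1) := Real.Gamma_pos_of_pos (by positivity)
  have hG1 : (0:ℝ) < Real.Gamma (ν + 1) := Real.Gamma_pos_of_pos (by positivity)
  rw [norm_div, Real.norm_eq_abs, Real.norm_eq_abs, abs_of_pos hGm, abs_mul,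
    abs_pow, Nat.abs_cast]
  calc (m:ℝ) * |y| ^ (m-1) / Real.Gamma (ν + m + 1)
      ≤ (m:ℝ) * R ^ (m-1) / Real.Gamma (ν + m + 1) := by gcongr
    _ ≤ (m:ℝ) * R ^ (m-1) / (Real.Gamma (ν+1) * m.factorial) := by
        have hR0 : (0:ℝ) ≤ R := le_trans (abs_nonneg y) hyR
        gcongr
        exact gamma_lb hν m

lemma key_id (hν : 0 < ν) {t : ℝ} (ht : 0 < t) :
    ν * t ^ (ν-1) * (∑' m : ℕ, t ^ m / Real.Gamma (ν + m + 1))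
      + t ^ ν * ((∑' m : ℕ, (m:ℝ) * t ^ (m-1) / Real.Gamma (ν + m + 1))
          - ∑' m : ℕ, t ^ m / Real.Gamma (ν + m + 1))
    = t ^ (ν-1) / Real.Gamma ν := by
  have sa := summable_a hν t
  have sd := summable_d hν t
  -- telescoping series c m = t^m / Γ(ν+m)
  set c : ℕ → ℝ := fun m => t ^ m / Real.Gamma (ν + m) with hc
  have hcs : (fun m : ℕ => c (m+1)) = fun m : ℕ => t * (t ^ m / Real.Gamma (ν + m + 1)) := by
    funext m
    simp only [hc]
    rw [show ν + (m+1:ℕ) = ν + m + 1 by push_cast; ring, pow_succ]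
    ring
  have hsc1 : Summable (fun m : ℕ => c (m+1)) := by
    rw [hcs]; exact sa.mul_left t
  have hsc : Summable c := (summable_nat_add_iff 1).mp hsc1
  have htel : (∑' m : ℕ, (c m - c (m+1))) = c 0 := by
    rw [Summable.tsum_sub hsc hsc1, Summable.tsum_eq_zero_add hsc]
    ring
  -- pointwise identity
  have hpt : ∀ m : ℕ,
      ν * t ^ (ν-1) * (t ^ m / Real.Gamma (ν + m + 1))
        + t ^ ν * ((m:ℝ) * t ^ (m-1) / Real.Gamma (ν + m + 1)
            - t ^ m / Real.Gamma (ν + m + 1))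
      = t ^ (ν-1) * (c m - c (m+1)) := by
    intro m
    have hGm : (0:ℝ) < Real.Gamma (ν + m) := Real.Gamma_pos_of_pos (by positivity)
    have hG1 : Real.Gamma (ν + m + 1) = (ν + m) * Real.Gamma (ν + m) :=
      Real.Gamma_add_one (by positivity)
    have hrpow : t ^ ν = t ^ (ν-1) * t := by
      rw [← Real.rpow_add_one ht.ne' (ν-1), sub_add_cancel]
    simp only [hc, hG1]
    rw [show ν + ((m:ℕ)+1:ℕ) = ν + m + 1 by push_cast; ring, hG1]
    cases m with
    | zero =>
      have hGν : Real.Gamma ν ≠ 0 := (Real.Gamma_pos_of_pos hν).ne'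
      simp [hrpow]
      field_simp
      ring
    | succ k =>
      have hk1 : ((k:ℝ)+1) ≠ 0 := by positivity
      have hνk : (0:ℝ) < ν + (k+1:ℕ) := by positivity
      push_cast
      rw [hrpow]
      have hGk : (0:ℝ) < Real.Gamma (ν + ((k:ℝ)+1)) := by
        have : (0:ℝ) < ν + ((k:ℝ)+1) := by positivity
        exact Real.Gamma_pos_of_pos this
      field_simp
      ring
  rw [← tsum_mul_left (a := ν * t ^ (ν-1)), ← Summable.tsum_sub sd sa,
    ← tsum_mul_left (a := t ^ ν),
    ← Summable.tsum_add (sa.mul_left (ν * t ^ (ν-1))) ((sd.sub sa).mul_left (t ^ ν))]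
  calc (∑' m : ℕ, (ν * t ^ (ν-1) * (t ^ m / Real.Gamma (ν + m + 1))
        + t ^ ν * ((m:ℝ) * t ^ (m-1) / Real.Gamma (ν + m + 1)
            - t ^ m / Real.Gamma (ν + m + 1))))
      = ∑' m : ℕ, t ^ (ν-1) * (c m - c (m+1)) := tsum_congr hpt
    _ = t ^ (ν-1) * ∑' m : ℕ, (c m - c (m+1)) := tsum_mul_left
    _ = t ^ (ν-1) * c 0 := by rw [htel]
    _ = t ^ (ν-1) / Real.Gamma ν := by simp [hc, div_eq_mul_inv]

noncomputable def F (ν : ℝ) : ℝ → ℝ :=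
  fun t => t ^ ν * (Real.exp (-t) * ∑' m : ℕ, t ^ m / Real.Gamma (ν + m + 1))

noncomputable def G (ν : ℝ) : ℝ → ℝ :=
  fun t => ∫ x in (0:ℝ)..t, Real.exp (-x) * x ^ (ν-1)

lemma hasDerivAt_F (hν : 0 < ν) {t : ℝ} (ht : 0 < t) :
    HasDerivAt (F ν) (Real.exp (-t) * t ^ (ν-1) / Real.Gamma ν) t := by
  have h1 : HasDerivAt (fun s : ℝ => s ^ ν) (ν * t ^ (ν-1)) t := by
    simpa [mul_comm] using Real.hasDerivAt_rpow_const (x := t) (p := ν) (Or.inl ht.ne')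
  have h2 : HasDerivAt (fun s : ℝ => Real.exp (-s)) (-Real.exp (-t)) t := by
    exact ((Real.hasDerivAt_exp (-t)).comp t (hasDerivAt_neg t)).congr_deriv (by ring)
  have h3 := hasDerivAt_g hν t
  have h4 := h1.mul (h2.mul h3)
  refine h4.congr_deriv ?_
  simp only [Pi.mul_apply]
  have hkey := key_id hν ht
  set A := ∑' m : ℕ, t ^ m / Real.Gamma (ν + m + 1)
  set B := ∑' m : ℕ, (m:ℝ) * t ^ (m-1) / Real.Gamma (ν + m + 1)
  have hGν : Real.Gamma ν ≠ 0 := (Real.Gamma_pos_of_pos hν).ne'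
  linear_combination (Real.exp (-t)) * hkey

lemma hasDerivAt_G (hν : 0 < ν) {t : ℝ} (ht : 0 < t) :
    HasDerivAt (G ν) (Real.exp (-t) * t ^ (ν-1)) t := by
  have hint : IntervalIntegrable (fun x => Real.exp (-x) * x ^ (ν-1))
      MeasureTheory.volume 0 t := by
    rw [intervalIntegrable_iff_integrableOn_Ioc_of_le ht.le]
    exact (Real.GammaIntegral_convergent hν).mono_set Ioc_subset_Ioi_self
  have hcont : ∀ x ∈ Ioi (0:ℝ), ContinuousAt (fun x : ℝ => Real.exp (-x) * x ^ (ν-1)) x := by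
    intro x hx
    exact ((Real.continuous_exp.comp continuous_neg).continuousAt).mul
      (Real.continuousAt_rpow_const x (ν-1) (Or.inl (ne_of_gt hx)))
  exact intervalIntegral.integral_hasDerivAt_right hint
    (ContinuousAt.stronglyMeasurableAtFilter isOpen_Ioi hcont t ht) (hcont t ht)

lemma Phi_const (hν : 0 < ν) {s t : ℝ} (hs : 0 < s) (ht : 0 < t) :
    Real.Gamma ν * F ν t - G ν t = Real.Gamma ν * F ν s - G ν s := by
  have hGν : Real.Gamma ν ≠ 0 := (Real.Gamma_pos_of_pos hν).ne'
  have hderiv : ∀ x ∈ uIcc s t,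
      HasDerivAt (fun u => Real.Gamma ν * F ν u - G ν u) ((fun _ : ℝ => (0:ℝ)) x) x := by
    intro x hx
    have hx0 : 0 < x := lt_of_lt_of_le (lt_min hs ht) hx.1
    have h := ((hasDerivAt_F hν hx0).const_mul (Real.Gamma ν)).sub (hasDerivAt_G hν hx0)
    refine h.congr_deriv ?_
    show _ = (0:ℝ)
    rw [mul_div_assoc', mul_div_cancel_left₀ _ hGν, sub_self]
  have := intervalIntegral.integral_eq_sub_of_hasDerivAt hderiv
    (intervalIntegrable_const (c := (0:ℝ)))
  simp only [intervalIntegral.integral_zero] at this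
  linarith [this.symm]

set_option maxHeartbeats 1000000 in
lemma tendsto_F_zero (hν : 0 < ν) : Tendsto (F ν) (nhdsWithin 0 (Ioi 0)) (nhds 0) := by
  have hg : ContinuousAt (fun s : ℝ => ∑' m : ℕ, s ^ m / Real.Gamma (ν + m + 1)) 0 :=
    (hasDerivAt_g hν 0).continuousAt
  have h1 : Tendsto (fun u : ℝ => u ^ ν) (nhds 0) (nhds 0) := by
    have := (Real.continuousAt_rpow_const 0 ν (Or.inr hν.le)).tendsto
    simpa [Real.zero_rpow hν.ne'] using this
  have h2 : ContinuousAt (fun u : ℝ => Real.exp (-u) *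
      ∑' m : ℕ, u ^ m / Real.Gamma (ν + m + 1)) 0 :=
    (Real.continuous_exp.comp continuous_neg).continuousAt.mul hg
  have h2' := h2.tendsto
  have h3 := h1.mul h2'
  rw [zero_mul] at h3
  exact h3.mono_left nhdsWithin_le_nhds

lemma tendsto_G_zero (hν : 0 < ν) : Tendsto (G ν) (nhdsWithin 0 (Ioi 0)) (nhds 0) := by
  have hi : MeasureTheory.IntegrableOn (fun x : ℝ => Real.exp (-x) * x ^ (ν-1)) (Icc 0 1) :=
    (integrableOn_Icc_iff_integrableOn_Ioc).mpr
      ((Real.GammaIntegral_convergent hν).mono_set Ioc_subset_Ioi_self)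
  have hcont := intervalIntegral.continuousOn_primitive (a := 0) (b := 1) hi
  have h0 := hcont 0 (by simp [zero_le_one])
  have h0' : Tendsto (fun u : ℝ => ∫ x in Ioc 0 u, Real.exp (-x) * x ^ (ν-1))
      (nhdsWithin 0 (Ioi 0)) (nhds 0) := by
    have heq : (∫ x in Ioc (0:ℝ) 0, Real.exp (-x) * x ^ (ν-1)) = 0 := by
      simp
    rw [ContinuousWithinAt, heq] at h0
    refine h0.mono_left ?_
    rw [← nhdsWithin_Ioc_eq_nhdsGT (zero_lt_one (α := ℝ))]
    exact nhdsWithin_mono _ Ioc_subset_Icc_self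
  refine h0'.congr' ?_
  filter_upwards [self_mem_nhdsWithin] with u hu
  exact (intervalIntegral.integral_of_le (le_of_lt hu)).symm

lemma Phi_eq_zero (hν : 0 < ν) {t : ℝ} (ht : 0 < t) :
    Real.Gamma ν * F ν t - G ν t = 0 := by
  set c := Real.Gamma ν * F ν 1 - G ν 1 with hc
  have hconst : ∀ u : ℝ, 0 < u → Real.Gamma ν * F ν u - G ν u = c :=
    fun u hu => Phi_const hν one_pos hu
  have htend : Tendsto (fun u : ℝ => Real.Gamma ν * F ν u - G ν u)
      (nhdsWithin 0 (Ioi 0)) (nhds 0) := by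
    have := ((tendsto_F_zero hν).const_mul (Real.Gamma ν)).sub (tendsto_G_zero hν)
    simpa using this
  have htend' : Tendsto (fun _ : ℝ => c) (nhdsWithin 0 (Ioi 0)) (nhds 0) := by
    refine htend.congr' ?_
    filter_upwards [self_mem_nhdsWithin] with u hu
    exact hconst u hu
  have : c = 0 := by
    have h2 : Tendsto (fun _ : ℝ => c) (nhdsWithin (0:ℝ) (Ioi 0)) (nhds c) :=
      tendsto_const_nhds
    exact tendsto_nhds_unique h2 htend'
  rw [hconst t ht, this]

end IGA


end IGA_aux

open IGA

/-- Asymptotics of the incomplete gamma function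
`γ*(ν,z) = e^{-z} ∑_{m≥0} z^m/Γ(ν+m+1)`: for `ν > 0`,
`t^ν γ*(ν,t) → 1` as `t → ∞`. -/
theorem incomplete_gamma_asymptotics (ν : ℝ) (hν : 0 < ν) :
    Tendsto
      (fun t : ℝ =>
        t ^ ν * (Real.exp (-t) * ∑' m : ℕ, t ^ m / Real.Gamma (ν + m + 1)))
      atTop (nhds 1) := by
  have hGν : (0:ℝ) < Real.Gamma ν := Real.Gamma_pos_of_pos hν
  have hG : Tendsto (G ν) atTop (nhds (Real.Gamma ν)) := by
    rw [Real.Gamma_eq_integral hν]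
    exact MeasureTheory.intervalIntegral_tendsto_integral_Ioi 0
      (Real.GammaIntegral_convergent hν) tendsto_id
  have h : Tendsto (fun t => G ν t / Real.Gamma ν) atTop (nhds 1) := by
    have := hG.div_const (Real.Gamma ν)
    rwa [div_self hGν.ne'] at this
  refine h.congr' ?_
  filter_upwards [eventually_gt_atTop (0:ℝ)] with t ht
  have := Phi_eq_zero hν ht
  have hF : F ν t = G ν t / Real.Gamma ν := by
    field_simp
    linarith
  exact (hF.symm : _)
end

section
/- Let μ be a nonnegative measure on ℝ^d satisfying ∫_{ℝ^d} μ(dξ)/(1+|ξ|²) < ∞, let N > 0, and set D_N = μ({ξ : |ξ| ≤ N}) and C_N = ∫_{|ξ|≥N} μ(dξ)/|ξ|². Let S_{t,n} = {w ∈ [0,∞)^n : w₁+⋯+w_n ≤ t}. Then ∫_{ℝ^{nd}} ∫_{S_{t,n}} exp(-∑_{i=1}^n w_i |ξ_i|²) dw ∏_{i=1}^n μ(dξ_i) ≤ ∑_{k=0}^n binom(n,k) (t^k/k!) D_N^k (2C_N)^{n-k}. -/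
open MeasureTheory ENNReal Real Set

section Helpers

lemma measurableSet_splx (n : ℕ) (t : ℝ) :
    MeasurableSet {w : Fin n → ℝ | (∀ i, 0 ≤ w i) ∧ ∑ i, w i ≤ t} := by
  have : {w : Fin n → ℝ | (∀ i, 0 ≤ w i) ∧ ∑ i, w i ≤ t}
      = (⋂ i, {w : Fin n → ℝ | 0 ≤ w i}) ∩ {w | ∑ i, w i ≤ t} := by
    ext w; simp [Set.mem_iInter]
  rw [this]
  apply MeasurableSet.inter
  · exact MeasurableSet.iInter fun i =>
      measurableSet_le measurable_const (measurable_pi_apply i)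
  · exact measurableSet_le (Finset.measurable_sum _ fun i _ => measurable_pi_apply i)
      measurable_const

lemma lintegral_exp_neg (a : ℝ) (ha : 0 < a) :
    ∫⁻ x in Ici (0:ℝ), ENNReal.ofReal (Real.exp (-(x * a))) = ENNReal.ofReal (1 / a) := by
  rw [← setLIntegral_congr (Ioi_ae_eq_Ici (a := (0:ℝ)))]
  rw [← ofReal_integral_eq_lintegral_ofReal]
  · congr 1
    have h : ∀ x : ℝ, Real.exp (-(x * a)) = Real.exp (-(a * x)) := by
      intro x; ring_nf
    simp_rw [h]
    have := MeasureTheory.integral_comp_mul_left_Ioi (fun y => Real.exp (-y)) 0 ha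
    simp only [mul_zero] at this
    rw [this, integral_exp_neg_Ioi_zero, smul_eq_mul, mul_one, one_div]
  · have := exp_neg_integrableOn_Ioi 0 ha
    refine this.congr_fun (fun x _ => by ring_nf) measurableSet_Ioi
  · filter_upwards with x using Real.exp_nonneg _

lemma lintegral_pow_Icc (t : ℝ) (ht : 0 ≤ t) (k : ℕ) :
    ∫⁻ x in Icc (0:ℝ) t, ENNReal.ofReal ((t - x) ^ k / k.factorial)
      = ENNReal.ofReal (t ^ (k+1) / (k+1).factorial) := by
  rw [← ofReal_integral_eq_lintegral_ofReal]
  · congr 1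
    rw [MeasureTheory.integral_Icc_eq_integral_Ioc, ← intervalIntegral.integral_of_le ht]
    simp_rw [div_eq_mul_inv]
    rw [intervalIntegral.integral_mul_const]
    rw [intervalIntegral.integral_comp_sub_left (fun x => x ^ k) t]
    simp only [sub_self, sub_zero]
    rw [integral_pow]
    rw [Nat.factorial_succ]
    push_cast
    field_simp
    simp

  · exact ((continuous_const.sub continuous_id').pow k).div_const _ |>.integrableOn_Icc
  · filter_upwards [ae_restrict_mem measurableSet_Icc] with x hx
    have : 0 ≤ t - x := by simp at hx; linarith [hx.2]
    positivity

lemma lintegral_pi_prod {X : Type*} [MeasurableSpace X] (μ : Measure X) [SigmaFinite μ] :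
    ∀ {n : ℕ} (f : Fin n → X → ℝ≥0∞), (∀ i, Measurable (f i)) →
    ∫⁻ x : Fin n → X, ∏ i, f i (x i) ∂(Measure.pi fun _ => μ) = ∏ i, ∫⁻ y, f i y ∂μ
  | 0, f, _ => by
      simp [lintegral_const]
  | (n+1), f, hf => by
      have mp := measurePreserving_piFinSuccAbove (fun _ : Fin (n+1) => μ) 0
      set e := MeasurableEquiv.piFinSuccAbove (fun _ : Fin (n+1) => X) 0 with he
      have : ∫⁻ x : Fin (n+1) → X, ∏ i, f i (x i) ∂(Measure.pi fun _ => μ)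
          = ∫⁻ p, ∏ i, f i ((e.symm p) i) ∂(μ.prod (Measure.pi fun _ : Fin n => μ)) := by
        rw [← mp.map_eq, MeasureTheory.lintegral_map_equiv]
        congr 1; funext x; congr 1; funext i; congr 1
        rw [MeasurableEquiv.symm_apply_apply]
      rw [this]
      have hsymm : ∀ p : X × (Fin n → X), ∀ i : Fin (n+1),
          (e.symm p) i = (Fin.cons p.1 p.2 : Fin (n+1) → X) i := by
        intro p i
        rw [he]
        simp [MeasurableEquiv.piFinSuccAbove, Fin.insertNthEquiv, Fin.insertNth_zero']
      simp_rw [hsymm]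
      have : ∀ p : X × (Fin n → X), ∏ i, f i ((Fin.cons p.1 p.2 : Fin (n+1) → X) i)
          = f 0 p.1 * ∏ i : Fin n, f i.succ (p.2 i) := by
        intro p
        rw [Fin.prod_univ_succ]
        simp
      simp_rw [this]
      rw [lintegral_prod_mul (f := f 0) (g := fun y : Fin n → X => ∏ i, f i.succ (y i)) (hf 0).aemeasurable]
      · rw [Fin.prod_univ_succ]
        congr 1
        exact lintegral_pi_prod μ (fun i => f i.succ) (fun i => hf i.succ)
      · exact (Finset.measurable_prod _ fun i _ =>
          (hf i.succ).comp (measurable_pi_apply i)).aemeasurable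

lemma prod_fin_succ_finset {n : ℕ} {M : Type*} [CommMonoid M]
    (S : Finset (Fin (n+1))) (f : Fin (n+1) → M) :
    ∏ i ∈ S, f i
      = (if (0 : Fin (n+1)) ∈ S then f 0 else 1) *
        ∏ i ∈ Finset.univ.filter (fun i : Fin n => i.succ ∈ S), f i.succ := by
  have h1 : ∏ i ∈ S, f i = ∏ i : Fin (n+1), (if i ∈ S then f i else 1) := by
    rw [Finset.prod_ite_mem, Finset.univ_inter]
  rw [h1, Fin.prod_univ_succ]
  congr 1
  rw [Finset.prod_filter]

lemma card_fin_succ_finset {n : ℕ} (S : Finset (Fin (n+1))) :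
    S.card = (if (0 : Fin (n+1)) ∈ S then 1 else 0)
      + (Finset.univ.filter (fun i : Fin n => i.succ ∈ S)).card := by
  have h1 : S.card = ∑ i : Fin (n+1), (if i ∈ S then 1 else 0) := by
    rw [Finset.sum_ite_mem, Finset.univ_inter, Finset.sum_const, smul_eq_mul, mul_one]
  rw [h1, Fin.sum_univ_succ]
  congr 1
  rw [Finset.card_filter]

lemma key_simplex : ∀ (n : ℕ) (t : ℝ), 0 ≤ t → ∀ (a : Fin n → ℝ), (∀ i, 0 ≤ a i) →
    ∀ (A : Finset (Fin n)), (∀ i, i ∉ A → 0 < a i) →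
    ∫⁻ w in {w : Fin n → ℝ | (∀ i, 0 ≤ w i) ∧ ∑ i, w i ≤ t},
        ENNReal.ofReal (Real.exp (-∑ i, w i * a i)) ∂volume
      ≤ ENNReal.ofReal (t ^ A.card / A.card.factorial) * ∏ i ∈ Aᶜ, ENNReal.ofReal (1 / a i)
  | 0, t, ht, a, ha, A, hA => by
      have hAe : A = ∅ := Finset.eq_empty_of_isEmpty A
      have hset : {w : Fin 0 → ℝ | (∀ i, 0 ≤ w i) ∧ ∑ i, w i ≤ t} = Set.univ := by
        ext w; simp [ht]
      subst hAe
      rw [hset, Measure.restrict_univ]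
      simp only [Finset.univ_eq_empty, Finset.sum_empty, neg_zero, Real.exp_zero,
        ofReal_one, lintegral_one, Finset.card_empty, pow_zero, Nat.factorial_zero,
        Nat.cast_one, Finset.compl_empty, Finset.prod_empty, mul_one]
      rw [volume_pi, Measure.pi_univ]
      simp
  | (n+1), t, ht, a, ha, A, hA => by
      classical
      set A' := Finset.univ.filter (fun i : Fin n => i.succ ∈ A) with hA'def
      set k := A'.card with hkdef
      set P := ∏ i ∈ A'ᶜ, ENNReal.ofReal (1 / a i.succ) with hPdef
      have hPne : P ≠ ⊤ :=
        (ENNReal.prod_lt_top (fun i _ => ENNReal.ofReal_lt_top)).ne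
      set I : ℝ → ℝ≥0∞ := fun s =>
        ∫⁻ y in {y : Fin n → ℝ | (∀ i, 0 ≤ y i) ∧ ∑ i, y i ≤ s},
          ENNReal.ofReal (Real.exp (-∑ i, y i * a i.succ)) ∂volume with hIdef
      have hIbound : ∀ s : ℝ, 0 ≤ s → I s ≤ ENNReal.ofReal (s ^ k / k.factorial) * P :=
        fun s hs => key_simplex n s hs (fun i => a i.succ) (fun i => ha i.succ) A'
          (fun i hi => hA i.succ (by simpa [hA'def] using hi))
      have hIzero : ∀ s : ℝ, s < 0 → I s = 0 := by
        intro s hs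
        have hempty : {y : Fin n → ℝ | (∀ i, 0 ≤ y i) ∧ ∑ i, y i ≤ s} = ∅ := by
          ext y
          simp only [Set.mem_setOf_eq, Set.mem_empty_iff_false, iff_false, not_and]
          intro h hle
          have : (0:ℝ) ≤ ∑ i, y i := Finset.sum_nonneg fun i _ => h i
          linarith
        simp only [hIdef, hempty, Measure.restrict_empty, lintegral_zero_measure]
      have mp := measurePreserving_piFinSuccAbove (fun _ : Fin (n+1) => (volume : Measure ℝ)) 0
      set e := MeasurableEquiv.piFinSuccAbove (fun _ : Fin (n+1) => ℝ) 0 with he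
      have hcons : ∀ (x : ℝ) (y : Fin n → ℝ), e.symm (x, y) = Fin.cons x y := by
        intro x y
        funext j
        rw [he]
        simp [MeasurableEquiv.piFinSuccAbove, Fin.insertNthEquiv, Fin.insertNth_zero']
      have hfmeas : Measurable fun w : Fin (n+1) → ℝ =>
          ENNReal.ofReal (Real.exp (-∑ i, w i * a i)) := by
        apply Measurable.ennreal_ofReal
        apply Real.measurable_exp.comp
        exact (Finset.measurable_sum _ fun i _ => (measurable_pi_apply i).mul_const _).neg
      have hmeas : Measurable fun w : Fin (n+1) → ℝ =>
          Set.indicator {w : Fin (n+1) → ℝ | (∀ i, 0 ≤ w i) ∧ ∑ i, w i ≤ t}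
            (fun w => ENNReal.ofReal (Real.exp (-∑ i, w i * a i))) w :=
        hfmeas.indicator (measurableSet_splx _ _)
      -- split the indicator
      have hsplit : ∀ (x : ℝ) (y : Fin n → ℝ),
          Set.indicator {w : Fin (n+1) → ℝ | (∀ i, 0 ≤ w i) ∧ ∑ i, w i ≤ t}
            (fun w => ENNReal.ofReal (Real.exp (-∑ i, w i * a i))) (Fin.cons x y)
          = Set.indicator (Set.Ici (0:ℝ))
              (fun x' => ENNReal.ofReal (Real.exp (-(x' * a 0)))) x *
            Set.indicator {y' : Fin n → ℝ | (∀ i, 0 ≤ y' i) ∧ ∑ i, y' i ≤ t - x}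
              (fun y' => ENNReal.ofReal (Real.exp (-∑ i, y' i * a i.succ))) y := by
        intro x y
        have hmem : (Fin.cons x y : Fin (n+1) → ℝ) ∈
            {w : Fin (n+1) → ℝ | (∀ i, 0 ≤ w i) ∧ ∑ i, w i ≤ t}
            ↔ (0 ≤ x ∧ ((∀ i, 0 ≤ y i) ∧ ∑ i, y i ≤ t - x)) := by
          simp only [Set.mem_setOf_eq]
          constructor
          · rintro ⟨h1, h2⟩
            rw [Fin.sum_univ_succ] at h2
            simp only [Fin.cons_zero, Fin.cons_succ] at h2
            exact ⟨by simpa using h1 0, fun i => by simpa using h1 i.succ, by linarith⟩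
          · rintro ⟨hx, h1, h2⟩
            refine ⟨fun i => ?_, ?_⟩
            · refine Fin.cases ?_ (fun j => ?_) i
              · simpa using hx
              · simpa using h1 j
            · rw [Fin.sum_univ_succ]
              simp only [Fin.cons_zero, Fin.cons_succ]
              linarith
        have hval : ENNReal.ofReal (Real.exp (-∑ i, (Fin.cons x y : Fin (n+1) → ℝ) i * a i))
            = ENNReal.ofReal (Real.exp (-(x * a 0))) *
              ENNReal.ofReal (Real.exp (-∑ i, y i * a i.succ)) := by
          rw [← ENNReal.ofReal_mul (Real.exp_nonneg _), ← Real.exp_add]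
          congr 2
          rw [Fin.sum_univ_succ]
          simp only [Fin.cons_zero, Fin.cons_succ]
          ring
        by_cases hx : (0:ℝ) ≤ x
        · by_cases hy : ((∀ i, 0 ≤ y i) ∧ ∑ i, y i ≤ t - x)
          · rw [Set.indicator_of_mem (hmem.mpr ⟨hx, hy⟩),
              Set.indicator_of_mem (Set.mem_Ici.mpr hx),
              Set.indicator_of_mem (show y ∈ {y' : Fin n → ℝ |
                (∀ i, 0 ≤ y' i) ∧ ∑ i, y' i ≤ t - x} from hy), hval]
          · rw [Set.indicator_of_notMem (fun h => hy (hmem.mp h).2),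
              Set.indicator_of_notMem (show y ∉ {y' : Fin n → ℝ |
                (∀ i, 0 ≤ y' i) ∧ ∑ i, y' i ≤ t - x} from hy), mul_zero]
        · rw [Set.indicator_of_notMem (fun h => hx (hmem.mp h).1),
            Set.indicator_of_notMem (fun h => hx (Set.mem_Ici.mp h)), zero_mul]
      -- step1 : reduce to 1-dimensional integral
      have step1 : ∫⁻ w in {w : Fin (n+1) → ℝ | (∀ i, 0 ≤ w i) ∧ ∑ i, w i ≤ t},
            ENNReal.ofReal (Real.exp (-∑ i, w i * a i)) ∂volume
          = ∫⁻ x in Set.Ici (0:ℝ),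
              ENNReal.ofReal (Real.exp (-(x * a 0))) * I (t - x) ∂volume := by
        rw [← lintegral_indicator (measurableSet_splx _ _)]
        rw [volume_pi, ← (MeasurePreserving.symm e mp).map_eq,
          MeasureTheory.lintegral_map_equiv]
        have : ∀ p : ℝ × (Fin n → ℝ),
            Set.indicator {w : Fin (n+1) → ℝ | (∀ i, 0 ≤ w i) ∧ ∑ i, w i ≤ t}
              (fun w => ENNReal.ofReal (Real.exp (-∑ i, w i * a i))) (e.symm p)
            = Set.indicator (Set.Ici (0:ℝ))
                (fun x' => ENNReal.ofReal (Real.exp (-(x' * a 0)))) p.1 *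
              Set.indicator {y' : Fin n → ℝ | (∀ i, 0 ≤ y' i) ∧ ∑ i, y' i ≤ t - p.1}
                (fun y' => ENNReal.ofReal (Real.exp (-∑ i, y' i * a i.succ))) p.2 := by
          intro p
          rw [show p = (p.1, p.2) from rfl, hcons, hsplit]
        simp_rw [this]
        rw [lintegral_prod]
        · have inner : ∀ x : ℝ,
              ∫⁻ y, Set.indicator (Set.Ici (0:ℝ))
                  (fun x' => ENNReal.ofReal (Real.exp (-(x' * a 0)))) x *
                Set.indicator {y' : Fin n → ℝ | (∀ i, 0 ≤ y' i) ∧ ∑ i, y' i ≤ t - x}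
                  (fun y' => ENNReal.ofReal (Real.exp (-∑ i, y' i * a i.succ))) y
                ∂(Measure.pi fun _ : Fin n => (volume : Measure ℝ))
              = Set.indicator (Set.Ici (0:ℝ))
                  (fun x' => ENNReal.ofReal (Real.exp (-(x' * a 0)))) x * I (t - x) := by
            intro x
            rw [lintegral_const_mul' _ _ (by
              by_cases hx : x ∈ Set.Ici (0:ℝ)
              · rw [Set.indicator_of_mem hx]; exact ofReal_ne_top
              · rw [Set.indicator_of_notMem hx]; exact zero_ne_top)]
            congr 1
            rw [hIdef, ← volume_pi, lintegral_indicator (measurableSet_splx _ _)]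
          simp_rw [inner]
          have : ∀ x : ℝ, Set.indicator (Set.Ici (0:ℝ))
                (fun x' => ENNReal.ofReal (Real.exp (-(x' * a 0)))) x * I (t - x)
              = Set.indicator (Set.Ici (0:ℝ))
                (fun x' => ENNReal.ofReal (Real.exp (-(x' * a 0))) * I (t - x')) x := by
            intro x
            by_cases hx : x ∈ Set.Ici (0:ℝ)
            · rw [Set.indicator_of_mem hx, Set.indicator_of_mem hx]
            · rw [Set.indicator_of_notMem hx, Set.indicator_of_notMem hx, zero_mul]
          simp_rw [this]
          rw [lintegral_indicator measurableSet_Ici]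
        · -- AEMeasurable of the product integrand
          apply Measurable.aemeasurable
          have h1 : Measurable fun p : ℝ × (Fin n → ℝ) =>
              Set.indicator {w : Fin (n+1) → ℝ | (∀ i, 0 ≤ w i) ∧ ∑ i, w i ≤ t}
                (fun w => ENNReal.ofReal (Real.exp (-∑ i, w i * a i))) (e.symm p) :=
            hmeas.comp e.symm.measurable
          have : (fun p : ℝ × (Fin n → ℝ) =>
              Set.indicator (Set.Ici (0:ℝ))
                  (fun x' => ENNReal.ofReal (Real.exp (-(x' * a 0)))) p.1 *
                Set.indicator {y' : Fin n → ℝ | (∀ i, 0 ≤ y' i) ∧ ∑ i, y' i ≤ t - p.1}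
                  (fun y' => ENNReal.ofReal (Real.exp (-∑ i, y' i * a i.succ))) p.2)
              = (fun p : ℝ × (Fin n → ℝ) =>
              Set.indicator {w : Fin (n+1) → ℝ | (∀ i, 0 ≤ w i) ∧ ∑ i, w i ≤ t}
                (fun w => ENNReal.ofReal (Real.exp (-∑ i, w i * a i))) (e.symm p)) := by
            funext p
            rw [show p = (p.1, p.2) from rfl, hcons, hsplit]
          rw [this]
          exact h1
      rw [step1]
      have hfilterc : Finset.univ.filter (fun i : Fin n => i.succ ∈ Aᶜ) = A'ᶜ := by
        ext i
        simp [hA'def, Finset.mem_filter, Finset.mem_compl]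
      by_cases h0 : (0 : Fin (n+1)) ∈ A
      · -- case 0 ∈ A
        have hcard : A.card = k + 1 := by
          rw [card_fin_succ_finset A, if_pos h0, ← hA'def, ← hkdef, add_comm]
        have hprodc : ∏ i ∈ Aᶜ, ENNReal.ofReal (1 / a i) = P := by
          rw [prod_fin_succ_finset Aᶜ, if_neg (by simp [h0]), one_mul, hfilterc]
        rw [hcard, hprodc]
        calc ∫⁻ x in Set.Ici (0:ℝ),
              ENNReal.ofReal (Real.exp (-(x * a 0))) * I (t - x) ∂volume
            ≤ ∫⁻ x in Set.Ici (0:ℝ),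
              Set.indicator (Set.Iic t)
                (fun x' => ENNReal.ofReal ((t - x') ^ k / k.factorial)) x * P ∂volume := by
              apply setLIntegral_mono
              · exact ((measurable_const.sub measurable_id').pow_const k
                  |>.div_const _ |>.ennreal_ofReal.indicator measurableSet_Iic).mul_const _
              · intro x hx
                by_cases hxt : x ≤ t
                · rw [Set.indicator_of_mem (Set.mem_Iic.mpr hxt)]
                  calc ENNReal.ofReal (Real.exp (-(x * a 0))) * I (t - x)
                      ≤ 1 * (ENNReal.ofReal ((t - x) ^ k / k.factorial) * P) := by
                        apply mul_le_mul'
                        · rw [← ofReal_one]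
                          apply ENNReal.ofReal_le_ofReal
                          rw [← Real.exp_zero]
                          apply Real.exp_le_exp.mpr
                          have := mul_nonneg (Set.mem_Ici.mp hx) (ha 0)
                          linarith
                        · exact hIbound (t - x) (by linarith)
                    _ = ENNReal.ofReal ((t - x) ^ k / k.factorial) * P := one_mul _
                · rw [Set.indicator_of_notMem (fun h => hxt (Set.mem_Iic.mp h)),
                    hIzero (t - x) (by linarith), mul_zero, zero_mul]
          _ = (∫⁻ x in Set.Ici (0:ℝ),
              Set.indicator (Set.Iic t)
                (fun x' => ENNReal.ofReal ((t - x') ^ k / k.factorial)) x ∂volume) * P :=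
              lintegral_mul_const' P _ hPne
          _ = ENNReal.ofReal (t ^ (k+1) / (k+1).factorial) * P := by
              rw [lintegral_indicator measurableSet_Iic,
                Measure.restrict_restrict measurableSet_Iic,
                Set.Iic_inter_Ici, lintegral_pow_Icc t ht k]
      · -- case 0 ∉ A
        have a0pos : 0 < a 0 := hA 0 h0
        have hcard : A.card = k := by
          rw [card_fin_succ_finset A, if_neg h0, ← hA'def, ← hkdef, zero_add]
        have hprodc : ∏ i ∈ Aᶜ, ENNReal.ofReal (1 / a i)
            = ENNReal.ofReal (1 / a 0) * P := by
          rw [prod_fin_succ_finset Aᶜ, if_pos (by simp [h0]), hfilterc]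
        rw [hcard, hprodc]
        calc ∫⁻ x in Set.Ici (0:ℝ),
              ENNReal.ofReal (Real.exp (-(x * a 0))) * I (t - x) ∂volume
            ≤ ∫⁻ x in Set.Ici (0:ℝ),
              ENNReal.ofReal (Real.exp (-(x * a 0))) *
                (ENNReal.ofReal (t ^ k / k.factorial) * P) ∂volume := by
              apply setLIntegral_mono
              · exact (measurable_id'.mul_const _).neg.exp.ennreal_ofReal.mul_const _
              · intro x hx
                by_cases hxt : x ≤ t
                · apply mul_le_mul_right
                  refine (hIbound (t - x) (by linarith)).trans ?_
                  apply mul_le_mul_left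
                  apply ENNReal.ofReal_le_ofReal
                  have hx0 : (0:ℝ) ≤ x := Set.mem_Ici.mp hx
                  have hnum : (t - x) ^ k ≤ t ^ k :=
                    pow_le_pow_left₀ (by linarith) (by linarith) k
                  have hfac : (0:ℝ) < k.factorial := Nat.cast_pos.mpr k.factorial_pos
                  exact (div_le_div_iff_of_pos_right hfac).mpr hnum
                · rw [hIzero (t - x) (by linarith), mul_zero]
                  exact zero_le
          _ = (∫⁻ x in Set.Ici (0:ℝ), ENNReal.ofReal (Real.exp (-(x * a 0))) ∂volume) *
              (ENNReal.ofReal (t ^ k / k.factorial) * P) :=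
              lintegral_mul_const' _ _ (by
                exact ENNReal.mul_ne_top ofReal_ne_top hPne)
          _ = ENNReal.ofReal (1 / a 0) * (ENNReal.ofReal (t ^ k / k.factorial) * P) := by
              rw [lintegral_exp_neg (a 0) a0pos]
          _ = ENNReal.ofReal (t ^ k / k.factorial) * (ENNReal.ofReal (1 / a 0) * P) := by
              ring


lemma sum_powerset_by_card {M : Type*} [AddCommMonoid M] (n : ℕ) (g : ℕ → M) :
    ∑ B ∈ (Finset.univ : Finset (Fin n)).powerset, g B.card
      = ∑ k ∈ Finset.range (n+1), (n.choose k) • g k := by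
  rw [← Finset.sum_fiberwise_of_maps_to (g := fun B : Finset (Fin n) => B.card)
    (fun B hB => Finset.mem_range.mpr (Nat.lt_succ_of_le
      (by simpa using Finset.card_le_card (Finset.mem_powerset.mp hB))))
    (fun B => g B.card)]
  refine Finset.sum_congr rfl fun k _ => ?_
  have : (Finset.univ : Finset (Fin n)).powerset.filter (fun B => B.card = k)
      = Finset.powersetCard k Finset.univ := by
    rw [Finset.powersetCard_eq_filter]
  rw [this]
  rw [Finset.sum_congr rfl (fun B hB => by
    rw [(Finset.mem_powersetCard.mp hB).2]), Finset.sum_const, Finset.card_powersetCard]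
  simp

end Helpers

/-- Lemma of Hu–Huang–Nualart–Tindel: if `μ` is a nonnegative measure on `ℝ^d`
satisfying Dalang's condition, and `D_N = μ({‖ξ‖ ≤ N})`,
`C_N = ∫_{‖ξ‖ ≥ N} μ(dξ)/‖ξ‖²`, then the integral over the simplex
`S_{t,n} = {w ∈ [0,∞)^n : ∑ wᵢ ≤ t}` of `exp(-∑ wᵢ ‖ξᵢ‖²)` is bounded by
`∑_{k=0}^n C(n,k) (t^k/k!) D_N^k (2 C_N)^{n-k}`. -/
theorem simplex_spectral_bound (d n : ℕ) (μ : Measure (EuclideanSpace ℝ (Fin d)))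
    (hdalang : ∫⁻ ξ, ENNReal.ofReal (1 / (1 + ‖ξ‖ ^ 2)) ∂μ < ⊤)
    (N t : ℝ) (hN : 0 < N) (ht : 0 < t) :
    ∫⁻ ξ : Fin n → EuclideanSpace ℝ (Fin d),
        ∫⁻ w in {w : Fin n → ℝ | (∀ i, 0 ≤ w i) ∧ ∑ i, w i ≤ t},
          ENNReal.ofReal (Real.exp (-∑ i, w i * ‖ξ i‖ ^ 2)) ∂volume
        ∂(Measure.pi fun _ => μ)
      ≤ ∑ k ∈ Finset.range (n + 1),
          (n.choose k : ℝ≥0∞) * ENNReal.ofReal (t ^ k / k.factorial) *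
            (μ {ξ | ‖ξ‖ ≤ N}) ^ k *
            (2 * ∫⁻ ξ in {ξ : EuclideanSpace ℝ (Fin d) | N ≤ ‖ξ‖},
                ENNReal.ofReal (1 / ‖ξ‖ ^ 2) ∂μ) ^ (n - k) := by
  classical
  -- σ-finiteness of μ from Dalang's condition
  have hsf : SigmaFinite μ := by
    refine ⟨⟨⟨fun m => Metric.ball 0 m, fun _ => trivial, fun m => ?_, Metric.iUnion_ball_nat 0⟩⟩⟩
    have hc : (0:ℝ) < 1 / (1 + (m:ℝ) ^ 2) := by positivity
    have hbound : ENNReal.ofReal (1 / (1 + (m:ℝ) ^ 2)) * μ (Metric.ball 0 m)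
        ≤ ∫⁻ ξ, ENNReal.ofReal (1 / (1 + ‖ξ‖ ^ 2)) ∂μ := by
      rw [← setLIntegral_const (Metric.ball (0 : EuclideanSpace ℝ (Fin d)) m)
        (ENNReal.ofReal (1 / (1 + (m:ℝ) ^ 2)))]
      refine le_trans (setLIntegral_mono
        (Measurable.ennreal_ofReal (measurable_const.div
          ((measurable_norm.pow_const 2).const_add 1))) fun x hx => ?_)
        (lintegral_mono' Measure.restrict_le_self le_rfl)
      apply ENNReal.ofReal_le_ofReal
      have hxm : ‖x‖ < (m:ℝ) := by simpa [mem_ball_zero_iff] using hx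
      have h2 : ‖x‖ ^ 2 ≤ (m:ℝ) ^ 2 := pow_le_pow_left₀ (norm_nonneg _) hxm.le 2
      apply one_div_le_one_div_of_le
      · positivity
      · linarith
    by_contra hinf
    push_neg at hinf
    rw [top_le_iff.mp hinf, ENNReal.mul_top
      (ne_of_gt (ENNReal.ofReal_pos.mpr hc))] at hbound
    exact absurd (lt_of_le_of_lt hbound hdalang) (lt_irrefl ⊤)
  set E := EuclideanSpace ℝ (Fin d) with hEdef
  set D := μ {ξ : E | ‖ξ‖ ≤ N} with hDdef
  set C2 := 2 * ∫⁻ ξ in {ξ : E | N ≤ ‖ξ‖}, ENNReal.ofReal (1 / ‖ξ‖ ^ 2) ∂μ with hC2def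
  have hsetle : MeasurableSet {x : E | ‖x‖ ≤ N} :=
    measurableSet_le measurable_norm measurable_const
  have hsetlt : MeasurableSet {x : E | N < ‖x‖} :=
    measurableSet_lt measurable_const measurable_norm
  set h : Finset (Fin n) → Fin n → E → ℝ≥0∞ := fun B i x =>
    if i ∈ B then Set.indicator {x : E | ‖x‖ ≤ N} 1 x
    else Set.indicator {x : E | N < ‖x‖} (fun x => ENNReal.ofReal (1 / ‖x‖ ^ 2)) x with hhdef
  have hhmeas : ∀ B i, Measurable (h B i) := by
    intro B i
    rw [hhdef]
    by_cases hiB : i ∈ B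
    · simp only [if_pos hiB]
      exact measurable_const.indicator hsetle
    · simp only [if_neg hiB]
      exact (Measurable.ennreal_ofReal
        (measurable_const.div (measurable_norm.pow_const 2))).indicator hsetlt
  -- pointwise bound on the inner integral
  have pointwise : ∀ ξ : Fin n → E,
      (∫⁻ w in {w : Fin n → ℝ | (∀ i, 0 ≤ w i) ∧ ∑ i, w i ≤ t},
          ENNReal.ofReal (Real.exp (-∑ i, w i * ‖ξ i‖ ^ 2)) ∂volume)
        ≤ ∑ B ∈ (Finset.univ : Finset (Fin n)).powerset,
            ENNReal.ofReal (t ^ B.card / B.card.factorial) * ∏ i, h B i (ξ i) := by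
    intro ξ
    set A := Finset.univ.filter (fun i : Fin n => ‖ξ i‖ ≤ N) with hAdef
    have hnlt : ∀ i, i ∉ A → N < ‖ξ i‖ := by
      intro i hi
      have : ¬ ‖ξ i‖ ≤ N := by simpa [hAdef] using hi
      linarith [not_le.mp this]
    have h1 := key_simplex n t ht.le (fun i => ‖ξ i‖ ^ 2) (fun i => sq_nonneg _) A
      (fun i hi => by
        have := hnlt i hi
        have : 0 < ‖ξ i‖ := lt_trans hN this
        positivity)
    have h2 : (∏ i ∈ Aᶜ, ENNReal.ofReal (1 / ‖ξ i‖ ^ 2)) = ∏ i, h A i (ξ i) := by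
      rw [← Finset.prod_mul_prod_compl A (fun i => h A i (ξ i))]
      have hA1 : ∏ i ∈ A, h A i (ξ i) = 1 := by
        apply Finset.prod_eq_one
        intro i hi
        rw [hhdef]
        simp only [if_pos hi]
        rw [Set.indicator_of_mem (show ξ i ∈ {x : E | ‖x‖ ≤ N} from
          (Finset.mem_filter.mp hi).2)]
        rfl
      have hA2 : ∏ i ∈ Aᶜ, h A i (ξ i) = ∏ i ∈ Aᶜ, ENNReal.ofReal (1 / ‖ξ i‖ ^ 2) := by
        apply Finset.prod_congr rfl
        intro i hi
        have hni : i ∉ A := Finset.mem_compl.mp hi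
        rw [hhdef]
        simp only [if_neg hni]
        rw [Set.indicator_of_mem (show ξ i ∈ {x : E | N < ‖x‖} from hnlt i hni)]
      rw [hA1, hA2, one_mul]
    refine le_trans h1 ?_
    rw [h2]
    exact Finset.single_le_sum (f := fun B : Finset (Fin n) =>
        ENNReal.ofReal (t ^ B.card / B.card.factorial) * ∏ i, h B i (ξ i))
      (fun _ _ => zero_le) (Finset.mem_powerset.mpr (Finset.subset_univ A))
  -- per-factor integral bound
  have hfact : ∀ (B : Finset (Fin n)) (i : Fin n),
      ∫⁻ x, h B i x ∂μ ≤ if i ∈ B then D else C2 := by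
    intro B i
    by_cases hiB : i ∈ B
    · rw [if_pos hiB, hhdef]
      simp only [if_pos hiB]
      rw [lintegral_indicator hsetle]
      simp [hDdef]
    · rw [if_neg hiB, hhdef]
      simp only [if_neg hiB]
      rw [lintegral_indicator hsetlt]
      calc ∫⁻ x in {x : E | N < ‖x‖}, ENNReal.ofReal (1 / ‖x‖ ^ 2) ∂μ
          ≤ ∫⁻ x in {x : E | N ≤ ‖x‖}, ENNReal.ofReal (1 / ‖x‖ ^ 2) ∂μ :=
            lintegral_mono_set (fun x hx => le_of_lt (Set.mem_setOf_eq ▸ hx))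
        _ ≤ C2 := by
            rw [hC2def]
            exact le_mul_of_one_le_left zero_le one_le_two
  -- combine
  calc ∫⁻ ξ : Fin n → E,
        ∫⁻ w in {w : Fin n → ℝ | (∀ i, 0 ≤ w i) ∧ ∑ i, w i ≤ t},
          ENNReal.ofReal (Real.exp (-∑ i, w i * ‖ξ i‖ ^ 2)) ∂volume
        ∂(Measure.pi fun _ => μ)
      ≤ ∫⁻ ξ : Fin n → E, ∑ B ∈ (Finset.univ : Finset (Fin n)).powerset,
          ENNReal.ofReal (t ^ B.card / B.card.factorial) * ∏ i, h B i (ξ i)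
        ∂(Measure.pi fun _ => μ) := lintegral_mono pointwise
    _ = ∑ B ∈ (Finset.univ : Finset (Fin n)).powerset,
        ∫⁻ ξ : Fin n → E, ENNReal.ofReal (t ^ B.card / B.card.factorial) *
          ∏ i, h B i (ξ i) ∂(Measure.pi fun _ => μ) := by
        apply lintegral_finset_sum
        intro B _
        exact (Finset.measurable_prod _ fun i _ =>
          (hhmeas B i).comp (measurable_pi_apply i)).const_mul _
    _ = ∑ B ∈ (Finset.univ : Finset (Fin n)).powerset,
        ENNReal.ofReal (t ^ B.card / B.card.factorial) *
          ∏ i, ∫⁻ x, h B i x ∂μ := by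
        refine Finset.sum_congr rfl fun B _ => ?_
        rw [lintegral_const_mul' _ _ ofReal_ne_top, lintegral_pi_prod μ (h B) (hhmeas B)]
    _ ≤ ∑ B ∈ (Finset.univ : Finset (Fin n)).powerset,
        ENNReal.ofReal (t ^ B.card / B.card.factorial) *
          (D ^ B.card * C2 ^ (n - B.card)) := by
        refine Finset.sum_le_sum fun B _ => ?_
        apply mul_le_mul_right
        calc ∏ i, ∫⁻ x, h B i x ∂μ
            ≤ ∏ i : Fin n, (if i ∈ B then D else C2) :=
              Finset.prod_le_prod' fun i _ => hfact B i
          _ = D ^ B.card * C2 ^ (n - B.card) := by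
              rw [← Finset.prod_mul_prod_compl B]
              rw [Finset.prod_congr rfl (fun i hi => if_pos hi),
                Finset.prod_congr rfl (fun i (hi : i ∈ Bᶜ) =>
                  if_neg (Finset.mem_compl.mp hi)),
                Finset.prod_const, Finset.prod_const, Finset.card_compl]
              simp
    _ = ∑ k ∈ Finset.range (n + 1), (n.choose k : ℝ≥0∞) *
          (ENNReal.ofReal (t ^ k / k.factorial) * (D ^ k * C2 ^ (n - k))) := by
        rw [sum_powerset_by_card n (fun k =>
          ENNReal.ofReal (t ^ k / k.factorial) * (D ^ k * C2 ^ (n - k)))]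
        refine Finset.sum_congr rfl fun k _ => ?_
        rw [nsmul_eq_mul]
    _ = ∑ k ∈ Finset.range (n + 1),
          (n.choose k : ℝ≥0∞) * ENNReal.ofReal (t ^ k / k.factorial) * D ^ k *
            C2 ^ (n - k) := by
        refine Finset.sum_congr rfl fun k _ => ?_
        ring
end
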